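/- Let F : M(Ω) → ℝ be convex and Gâteaux differentiable with derivative representable by p̄ ∈ C_0(Ω) at a minimizer μ̄ of μ ↦ F(μ) + α‖μ‖_{M(Ω)}. Then |p̄(ω)| ≤ α for all ω ∈ Ω, and p̄ = −α·sgn(μ̄) on the support of μ̄ (i.e., −p̄ ∈ α∂‖μ̄‖_{M(Ω)}). -/

import Mathlib

/-!
Along the segment `t ↦ μ̄ + t • (μ - μ̄)` the norm is convex, so minimality of `μ̄` for
`F + α‖·‖` bounds the difference quotients of `F` below by `α (‖μ̄‖ - ‖μ‖)`; passing to the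
limit gives the subgradient inequality `-p̄ ∈ α ∂‖μ̄‖`. Testing it with `μ̄ ± δ_ω`, where the
Dirac functional `δ_ω` has norm at most one, gives `|p̄ ω| ≤ α`.
-/

open Filter Topology

section Subgradient

variable {E : Type*} [SeminormedAddCommGroup E] [NormedSpace ℝ E]

theorem norm_add_smul_sub_le {x y : E} {t : ℝ} (ht₀ : 0 ≤ t) (ht₁ : t ≤ 1) :
    ‖x + t • (y - x)‖ ≤ (1 - t) * ‖x‖ + t * ‖y‖ := by
  have hcomb : x + t • (y - x) = (1 - t) • x + t • y := by module
  simpa [hcomb] using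
    (convexOn_norm convex_univ).2 trivial trivial (sub_nonneg.2 ht₁) ht₀ (by ring)

theorem mul_sub_norm_le_of_tendsto_slope_of_minimizer {F : E → ℝ} {α d : ℝ} (hα : 0 ≤ α)
    {x y : E} (hmin : ∀ z, F x + α * ‖x‖ ≤ F z + α * ‖z‖)
    (hd : Tendsto (fun t : ℝ => (F (x + t • (y - x)) - F x) / t) (𝓝[>] 0) (𝓝 d)) :
    α * (‖x‖ - ‖y‖) ≤ d := by
  refine ge_of_tendsto hd ?_
  filter_upwards [Ioc_mem_nhdsGT one_pos] with t ⟨ht₀, ht₁⟩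
  have hnorm := mul_le_mul_of_nonneg_left (norm_add_smul_sub_le (x := x) (y := y) ht₀.le ht₁) hα
  have hF := hmin (x + t • (y - x))
  rw [le_div_iff₀ ht₀]
  linarith

theorem abs_apply_le_mul_norm_of_neg_subgradient {α : ℝ} (hα : 0 ≤ α) {μ₀ : E →L[ℝ] ℝ} {p : E}
    (hsub : ∀ μ : E →L[ℝ] ℝ, -((μ - μ₀) p) ≤ α * (‖μ‖ - ‖μ₀‖)) (δ : E →L[ℝ] ℝ) :
    |δ p| ≤ α * ‖δ‖ := by
  have hplus := hsub (μ₀ + δ)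
  have hminus := hsub (μ₀ - δ)
  rw [add_sub_cancel_left] at hplus
  rw [sub_sub_cancel_left, neg_apply, neg_neg] at hminus
  have hnplus := mul_le_mul_of_nonneg_left (norm_add_le μ₀ δ) hα
  have hnminus := mul_le_mul_of_nonneg_left (norm_sub_le μ₀ δ) hα
  rw [abs_le]
  constructor <;> linarith

end Subgradient

theorem ContinuousMap.norm_evalCLM_le {𝕜 Ω M : Type*} [NontriviallyNormedField 𝕜]
    [TopologicalSpace Ω] [CompactSpace Ω] [NormedAddCommGroup M] [NormedSpace 𝕜 M] (ω : Ω) :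
    ‖(ContinuousMap.evalCLM 𝕜 ω : C(Ω, M) →L[𝕜] M)‖ ≤ 1 :=
  ContinuousLinearMap.opNorm_le_bound _ zero_le_one fun f => by
    simpa using f.norm_coe_le_norm ω

theorem stmt12_general {Ω : Type*} [MetricSpace Ω] [CompactSpace Ω]
    (F : (C(Ω, ℝ) →L[ℝ] ℝ) → ℝ)
    (α : ℝ) (hα : 0 < α) (μbar : C(Ω, ℝ) →L[ℝ] ℝ) (pbar : C(Ω, ℝ))
    (hmin : ∀ μ, F μbar + α * ‖μbar‖ ≤ F μ + α * ‖μ‖)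
    (hder : ∀ μ : C(Ω, ℝ) →L[ℝ] ℝ,
      Tendsto (fun t : ℝ => (F (μbar + t • (μ - μbar)) - F μbar) / t)
        (nhdsWithin 0 (Set.Ioi 0)) (nhds ((μ - μbar) pbar))) :
    (∀ ω : Ω, |pbar ω| ≤ α) ∧
    (∀ μ : C(Ω, ℝ) →L[ℝ] ℝ, -((μ - μbar) pbar) ≤ α * (‖μ‖ - ‖μbar‖)) := by
  have hsub : ∀ μ : C(Ω, ℝ) →L[ℝ] ℝ, -((μ - μbar) pbar) ≤ α * (‖μ‖ - ‖μbar‖) := fun μ => by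
    have := mul_sub_norm_le_of_tendsto_slope_of_minimizer (E := C(Ω, ℝ) →L[ℝ] ℝ) hα.le hmin (hder μ)
    linarith
  refine ⟨fun ω => ?_, hsub⟩
  let δ : C(Ω, ℝ) →L[ℝ] ℝ := ContinuousMap.evalCLM ℝ ω
  calc |pbar ω| = |δ pbar| := rfl
    _ ≤ α * ‖δ‖ := abs_apply_le_mul_norm_of_neg_subgradient hα.le hsub _
    _ ≤ α * 1 := mul_le_mul_of_nonneg_left (ContinuousMap.norm_evalCLM_le ω) hα.le
    _ = α := mul_one α

/-- Let `F : M(Ω) → ℝ` be convex and Gâteaux differentiable at a minimizer `μ̄`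
of `μ ↦ F(μ) + α‖μ‖`, with derivative represented by `p̄ ∈ C(Ω)` (here
`M(Ω) = C(Ω)*` for compact metric `Ω`). Then `|p̄(ω)| ≤ α` for all `ω`, and
`−p̄ ∈ α ∂‖μ̄‖` (the subgradient inequality). -/
theorem stmt12 {Ω : Type*} [MetricSpace Ω] [CompactSpace Ω]
    (F : (C(Ω, ℝ) →L[ℝ] ℝ) → ℝ) (hF : ConvexOn ℝ Set.univ F)
    (α : ℝ) (hα : 0 < α) (μbar : C(Ω, ℝ) →L[ℝ] ℝ) (pbar : C(Ω, ℝ))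
    (hmin : ∀ μ, F μbar + α * ‖μbar‖ ≤ F μ + α * ‖μ‖)
    (hder : ∀ μ : C(Ω, ℝ) →L[ℝ] ℝ,
      Tendsto (fun t : ℝ => (F (μbar + t • (μ - μbar)) - F μbar) / t)
        (nhdsWithin 0 (Set.Ioi 0)) (nhds ((μ - μbar) pbar))) :
    (∀ ω : Ω, |pbar ω| ≤ α) ∧
    (∀ μ : C(Ω, ℝ) →L[ℝ] ℝ, -((μ - μbar) pbar) ≤ α * (‖μ‖ - ‖μbar‖)) :=
  stmt12_general F α hα μbar pbar hmin hder
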